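/- arXiv:2412.07805 — 3 statements merged into one kernel-verified Lean document; each statement's English description precedes it below -/
import Mathlib

section
/- Let (K_i)_{i∈{0,...,m}} be a simplex-wise filtration of simplicial complexes, and suppose K_i = K_{i-1} ∪ {σ_i} where σ_i is a q-simplex. Then ∂σ_i ∈ B_{q-1}(K_{i-1}) if and only if σ_i gives birth to a degree-q homology class. -/
set_option maxSynthPendingDepth 2

/-! Simplicial ℤ/2 chains and homology machinery. -/

/-- Chains with `ℤ/2` coefficients, formal sums of finite subsets of `V`. -/
abbrev Ch (V : Type*) := Finset V →₀ ZMod 2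

/-- The simplicial boundary operator: a simplex with at least two vertices is sent
to the sum of its codimension-1 faces; vertices are sent to `0`. -/
noncomputable def bdry (V : Type*) [DecidableEq V] : Ch V →ₗ[ZMod 2] Ch V :=
  Finsupp.linearCombination (ZMod 2) fun σ : Finset V =>
    if σ.card ≤ 1 then 0 else ∑ v ∈ σ, Finsupp.single (σ.erase v) (1 : ZMod 2)

/-- A simplicial complex: a collection of nonempty finite subsets of `V`
closed under taking nonempty subsets. -/
def IsComplex {V : Type*} (K : Set (Finset V)) : Prop :=
  ∀ σ ∈ K, σ.Nonempty ∧ ∀ τ ⊆ σ, τ.Nonempty → τ ∈ K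

/-- The space of chains supported on simplices of `K` with `k` vertices
(i.e. the simplicial chain group of degree `k - 1`). -/
noncomputable def chainCard {V : Type*} [DecidableEq V] (K : Set (Finset V)) (k : ℕ) :
    Submodule (ZMod 2) (Ch V) :=
  Submodule.span (ZMod 2) {f | ∃ σ ∈ K, σ.card = k ∧ f = Finsupp.single σ 1}

theorem chainCard_mono {V : Type*} [DecidableEq V] {K₁ K₂ : Set (Finset V)}
    (h : K₁ ⊆ K₂) (k : ℕ) : chainCard K₁ k ≤ chainCard K₂ k := by
  apply Submodule.span_mono
  rintro f ⟨σ, hσ, hc, rfl⟩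
  exact ⟨σ, h hσ, hc, rfl⟩

/-- Cycles (in cardinality grading `k`, i.e. degree `k-1`) of a chain subcomplex `W`. -/
noncomputable def cyclesOf {V : Type*} [DecidableEq V] (W : ℕ → Submodule (ZMod 2) (Ch V)) (k : ℕ) :
    Submodule (ZMod 2) (Ch V) :=
  W k ⊓ LinearMap.ker (bdry V)

/-- Boundaries (in cardinality grading `k`, i.e. degree `k-1`) of a chain subcomplex `W`. -/
noncomputable def bdriesOf {V : Type*} [DecidableEq V] (W : ℕ → Submodule (ZMod 2) (Ch V)) (k : ℕ) :
    Submodule (ZMod 2) (Ch V) :=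
  Submodule.map (bdry V) (W (k + 1))

/-- Homology of the chain complex `W` in cardinality grading `k` (degree `k - 1`):
cycles modulo boundaries. -/
abbrev homolOf {V : Type*} [DecidableEq V] (W : ℕ → Submodule (ZMod 2) (Ch V)) (k : ℕ) :=
  ↥(cyclesOf W k) ⧸ (bdriesOf W k).comap (cyclesOf W k).subtype

/-- The map on homology induced by a degreewise inclusion of chain complexes. -/
noncomputable def homolMap {V : Type*} [DecidableEq V]
    (W W' : ℕ → Submodule (ZMod 2) (Ch V)) (h : ∀ k, W k ≤ W' k) (k : ℕ) :
    homolOf W k →ₗ[ZMod 2] homolOf W' k :=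
  Submodule.mapQ _ _ (Submodule.inclusion (inf_le_inf (h k) le_rfl))
    (by
      intro x hx
      simp only [Submodule.mem_comap, Submodule.subtype_apply, Submodule.coe_inclusion]
        at hx ⊢
      exact Submodule.map_mono (h (k + 1)) hx)

/-! Persistence: birth and death in a simplex-wise filtration. -/

/-- The class `γ ∈ H_{k-1}(K j)` is born at index `j`: for every `j' < j`
no class of `H_{k-1}(K j')` is mapped to `γ` by the map induced by inclusion. -/
def BornAt {V : Type*} [DecidableEq V] (K : ℕ → Set (Finset V)) (k j : ℕ)
    (γ : homolOf (chainCard (K j)) k) : Prop :=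
  ∀ j' < j, ∀ (h : K j' ⊆ K j), ∀ β : homolOf (chainCard (K j')) k,
    homolMap (chainCard (K j')) (chainCard (K j)) (fun n => chainCard_mono h n) k β ≠ γ

/-- At index `d`, the image of the class `γ ∈ H_{k-1}(K j)` agrees with the image of
a class present strictly before index `j`. -/
def MergesAt {V : Type*} [DecidableEq V] (K : ℕ → Set (Finset V)) (k j : ℕ)
    (γ : homolOf (chainCard (K j)) k) (d : ℕ) : Prop :=
  ∃ j' < j, ∃ β : homolOf (chainCard (K j')) k,
    ∀ (h : K j ⊆ K d) (h' : K j' ⊆ K d),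
      homolMap (chainCard (K j)) (chainCard (K d)) (fun n => chainCard_mono h n) k γ =
      homolMap (chainCard (K j')) (chainCard (K d)) (fun n => chainCard_mono h' n) k β

/-- The class `γ ∈ H_{k-1}(K j)`, born at `j`, dies at index `d`: `d` is the smallest
index at which the image of `γ` coincides with the image of a class from an index
strictly before `j`. -/
def DiesAt {V : Type*} [DecidableEq V] (K : ℕ → Set (Finset V)) (k j : ℕ)
    (γ : homolOf (chainCard (K j)) k) (d : ℕ) : Prop :=
  j ≤ d ∧ MergesAt K k j γ d ∧ ∀ d', j ≤ d' → d' < d → ¬ MergesAt K k j γ d'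

/-- The simplex added at index `i` gives birth to a homology class of degree `k - 1`. -/
def GivesBirth {V : Type*} [DecidableEq V] (K : ℕ → Set (Finset V)) (k i : ℕ) : Prop :=
  ∃ γ : homolOf (chainCard (K i)) k, BornAt K k i γ

/-- The simplex added at index `i` kills a homology class of degree `k - 1`. -/
def Kills {V : Type*} [DecidableEq V] (K : ℕ → Set (Finset V)) (k i : ℕ) : Prop :=
  ∃ j, ∃ γ : homolOf (chainCard (K j)) k, BornAt K k j γ ∧ DiesAt K k j γ i

/-!
Adding the `q`-simplex `σ` to `K` changes chains only in degree `q`, and there only by the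
coefficient at `σ`. If `∂σ = ∂τ` with `τ` a chain of the old complex, then `σ - τ` is a new
cycle whose coefficient at `σ` is `1`; classes coming from earlier complexes, and boundaries
of the new complex, all vanish at `σ`, so `[σ - τ]` is born at this step. Conversely a born
class has a representative `x` with `x σ = 1` (otherwise it lives in the old complex), and
then `σ - x` is an old chain with boundary `∂σ`.
-/

section Chains

variable {V : Type*} [DecidableEq V]

lemma chainCard_eq_supported (K : Set (Finset V)) (k : ℕ) :
    chainCard K k = Finsupp.supported (ZMod 2) (ZMod 2) {τ | τ ∈ K ∧ τ.card = k} := by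
  rw [Finsupp.supported_eq_span_single, chainCard]
  congr 1
  ext f
  simp only [Set.mem_ofPred_eq, Set.mem_image]
  exact ⟨fun ⟨τ, hτ, hc, hf⟩ => ⟨τ, ⟨hτ, hc⟩, hf.symm⟩,
    fun ⟨τ, ⟨hτ, hc⟩, hf⟩ => ⟨τ, hτ, hc, hf.symm⟩⟩

lemma mem_chainCard {K : Set (Finset V)} {k : ℕ} {f : Ch V} :
    f ∈ chainCard K k ↔ ∀ τ ∈ f.support, τ ∈ K ∧ τ.card = k := by
  rw [chainCard_eq_supported, Finsupp.mem_supported']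
  simp only [Finsupp.mem_support_iff, Set.mem_ofPred_eq]
  exact forall_congr' fun τ => not_imp_comm

lemma single_mem_chainCard {K : Set (Finset V)} {σ : Finset V} (hσ : σ ∈ K) :
    (Finsupp.single σ 1 : Ch V) ∈ chainCard K σ.card :=
  Submodule.subset_span ⟨σ, hσ, rfl, rfl⟩

lemma apply_eq_zero_of_mem_chainCard {K : Set (Finset V)} {k : ℕ} {f : Ch V}
    (hf : f ∈ chainCard K k) {σ : Finset V} (hσ : σ ∉ K) : f σ = 0 := by
  by_contra h
  exact hσ (mem_chainCard.mp hf σ (Finsupp.mem_support_iff.mpr h)).1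

lemma erase_mem_chainCard_of_mem_union {K : Set (Finset V)} {σ : Finset V} {k : ℕ} {f : Ch V}
    (hf : f ∈ chainCard (K ∪ {σ}) k) : f.erase σ ∈ chainCard K k := by
  rw [mem_chainCard] at hf ⊢
  intro τ hτ
  rw [Finsupp.support_erase, Finset.mem_erase] at hτ
  obtain ⟨hτK | rfl, hc⟩ := hf τ hτ.2
  · exact ⟨hτK, hc⟩
  · exact absurd rfl hτ.1

lemma chainCard_union_singleton_of_card_ne {K : Set (Finset V)} {σ : Finset V} {k : ℕ}
    (hk : σ.card ≠ k) : chainCard (K ∪ {σ}) k = chainCard K k := by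
  refine le_antisymm (fun f hf => ?_) (chainCard_mono Set.subset_union_left k)
  have hσ : σ ∉ f.support := fun hσ => hk (mem_chainCard.mp hf σ hσ).2
  simpa only [Finsupp.erase_of_notMem_support hσ] using erase_mem_chainCard_of_mem_union hf

lemma bdry_single (σ : Finset V) :
    bdry V (Finsupp.single σ 1) =
      if σ.card ≤ 1 then 0 else ∑ v ∈ σ, Finsupp.single (σ.erase v) 1 := by
  simp [bdry, Finsupp.linearCombination_single]

lemma bdry_mem_chainCard {K : Set (Finset V)} (hK : IsComplex K) {k : ℕ} {f : Ch V}
    (hf : f ∈ chainCard K (k + 1)) : bdry V f ∈ chainCard K k := by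
  induction hf using Submodule.span_induction with
  | mem g hg =>
    obtain ⟨σ, hσ, hc, rfl⟩ := hg
    rw [bdry_single]
    split_ifs with h
    · exact zero_mem _
    refine Submodule.sum_mem _ fun v hv => ?_
    have hcard : (σ.erase v).card = k := by rw [Finset.card_erase_of_mem hv, hc]; rfl
    have hface : σ.erase v ∈ K :=
      (hK σ hσ).2 _ (Finset.erase_subset v σ) (Finset.card_pos.mp (by omega))
    exact hcard ▸ single_mem_chainCard hface
  | zero => simp
  | add x y _ _ hx hy => rw [map_add]; exact add_mem hx hy
  | smul c x _ hx => rw [map_smul]; exact Submodule.smul_mem _ _ hx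

lemma bdry_apply_eq_zero_of_notMem {K : Set (Finset V)} (hK : IsComplex K) {k : ℕ} {f : Ch V}
    (hf : f ∈ chainCard K (k + 1)) {σ : Finset V} (hσ : σ ∉ K) : bdry V f σ = 0 :=
  apply_eq_zero_of_mem_chainCard (bdry_mem_chainCard hK hf) hσ

end Chains

section Homology

variable {V : Type*} [DecidableEq V] {W : ℕ → Submodule (ZMod 2) (Ch V)} {k : ℕ}

lemma homolOf_mk_eq_mk_iff {x y : cyclesOf W k} :
    (Submodule.Quotient.mk x : homolOf W k) = Submodule.Quotient.mk y ↔
      (x : Ch V) - y ∈ bdriesOf W k := by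
  rw [Submodule.Quotient.eq, Submodule.mem_comap, Submodule.subtype_apply,
    Submodule.coe_sub]

lemma apply_eq_of_homolOf_mk_eq {σ : Finset V} (hσ : ∀ w ∈ W (k + 1), bdry V w σ = 0)
    {x y : cyclesOf W k}
    (h : (Submodule.Quotient.mk x : homolOf W k) = Submodule.Quotient.mk y) :
    (x : Ch V) σ = (y : Ch V) σ := by
  obtain ⟨w, hw, hwxy⟩ := homolOf_mk_eq_mk_iff.mp h
  rw [← sub_eq_zero, ← Finsupp.sub_apply, ← hwxy, hσ w hw]

end Homology

lemma bornAt_mk_of_apply_ne_zero {V : Type*} [DecidableEq V] {K : ℕ → Set (Finset V)}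
    {k i : ℕ} {σ : Finset V} (hσ : ∀ j < i, σ ∉ K j)
    (hbdry : ∀ w ∈ chainCard (K i) (k + 1), bdry V w σ = 0)
    {z : cyclesOf (chainCard (K i)) k} (hz : (z : Ch V) σ ≠ 0) :
    BornAt K k i (Submodule.Quotient.mk z) := by
  intro j hj _ β hβz
  obtain ⟨b, rfl⟩ := Submodule.Quotient.mk_surjective _ β
  refine hz ?_
  rw [← apply_eq_of_homolOf_mk_eq hbdry hβz]
  exact apply_eq_zero_of_mem_chainCard b.2.1 (hσ j hj)

lemma subset_of_le_of_forall_subset_succ {α : Type*} {K : ℕ → Set α} {m : ℕ}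
    (hK : ∀ n, 1 ≤ n → n ≤ m → K (n - 1) ⊆ K n) {a b : ℕ} (hab : a ≤ b)
    (hbm : b ≤ m) : K a ⊆ K b := by
  induction b, hab using Nat.le_induction with
  | base => exact subset_rfl
  | succ n _ ih => exact (ih (by omega)).trans (hK (n + 1) (by omega) hbm)

lemma notMem_of_lt_of_forall_step {α : Type*} {K : ℕ → Set α} {σs : ℕ → α} {m : ℕ}
    (hstep : ∀ i, 1 ≤ i → i ≤ m → σs i ∉ K (i - 1) ∧ K i = K (i - 1) ∪ {σs i})
    {i j : ℕ} (hji : j < i) (him : i ≤ m) : σs i ∉ K j := fun hσ =>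
  (hstep i (by omega) him).1 <| subset_of_le_of_forall_subset_succ
    (fun n h1 h2 => (hstep n h1 h2).2 ▸ Set.subset_union_left) (by omega : j ≤ i - 1)
    (by omega) hσ

lemma bdry_single_mem_bdriesOf_of_apply_eq_one {V : Type*} [DecidableEq V]
    {K : Set (Finset V)} {σ : Finset V} {q : ℕ} {x : Ch V}
    (hx : x ∈ cyclesOf (chainCard (K ∪ {σ})) (q + 1)) (hxσ : x σ = 1) :
    bdry V (Finsupp.single σ 1) ∈ bdriesOf (chainCard K) q := by
  refine ⟨-x.erase σ, neg_mem (erase_mem_chainCard_of_mem_union hx.1), ?_⟩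
  rw [Finsupp.erase_eq_sub_single, hxσ, neg_sub, map_sub, LinearMap.mem_ker.mp hx.2, sub_zero]

theorem boundary_mem_iff_givesBirth_general {V : Type*} [DecidableEq V]
    (m : ℕ) (K : ℕ → Set (Finset V)) (σs : ℕ → Finset V)
    (hcx : ∀ i ≤ m, IsComplex (K i))
    (hstep : ∀ i, 1 ≤ i → i ≤ m → σs i ∉ K (i - 1) ∧ K i = K (i - 1) ∪ {σs i})
    (q i : ℕ) (hi1 : 1 ≤ i) (him : i ≤ m) (hq : (σs i).card = q + 1) :
    bdry V (Finsupp.single (σs i) 1) ∈ bdriesOf (chainCard (K (i - 1))) q ↔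
      GivesBirth K (q + 1) i := by
  obtain ⟨hσ_new, hKi⟩ := hstep i hi1 him
  have hsub : K (i - 1) ⊆ K i := hKi ▸ Set.subset_union_left
  constructor
  · rintro ⟨τ, hτ, hτσ⟩
    have hσ : Finsupp.single (σs i) 1 ∈ chainCard (K i) (q + 1) :=
      hq ▸ single_mem_chainCard (hKi ▸ Set.mem_union_right _ rfl)
    have hcycle : Finsupp.single (σs i) 1 - τ ∈ cyclesOf (chainCard (K i)) (q + 1) :=
      ⟨sub_mem hσ (chainCard_mono hsub _ hτ), LinearMap.sub_mem_ker_iff.mpr hτσ.symm⟩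
    have hbdry : ∀ w ∈ chainCard (K i) (q + 1 + 1), bdry V w (σs i) = 0 := by
      rw [hKi, chainCard_union_singleton_of_card_ne (by omega)]
      exact fun w hw => bdry_apply_eq_zero_of_notMem (hcx (i - 1) (by omega)) hw hσ_new
    refine ⟨_, bornAt_mk_of_apply_ne_zero (z := ⟨_, hcycle⟩)
      (fun j hj => notMem_of_lt_of_forall_step hstep hj him) hbdry ?_⟩
    simp [apply_eq_zero_of_mem_chainCard hτ hσ_new]
  · rintro ⟨γ, hγ⟩
    obtain ⟨⟨x, hx⟩, rfl⟩ := Submodule.Quotient.mk_surjective _ γ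
    rw [hKi] at hx
    rcases (by decide : ∀ a : ZMod 2, a = 0 ∨ a = 1) (x (σs i)) with h0 | h1
    · have hx_old : x ∈ chainCard (K (i - 1)) (q + 1) := by
        simpa [Finsupp.erase_of_notMem_support, h0] using erase_mem_chainCard_of_mem_union hx.1
      exact absurd rfl (hγ (i - 1) (by omega) hsub (Submodule.Quotient.mk ⟨x, hx_old, hx.2⟩))
    · exact bdry_single_mem_bdriesOf_of_apply_eq_one hx h1

/-- In a simplex-wise filtration, if the simplex `σ i` added at step `i`
is a `q`-simplex, then `∂ σ i ∈ B_{q-1}(K (i-1))` if and only if `σ i` gives birth to a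
degree-`q` homology class. -/
theorem boundary_mem_iff_givesBirth {V : Type*} [Fintype V] [DecidableEq V]
    (m : ℕ) (K : ℕ → Set (Finset V)) (σs : ℕ → Finset V)
    (hK0 : K 0 = ∅)
    (hcx : ∀ i ≤ m, IsComplex (K i))
    (hstep : ∀ i, 1 ≤ i → i ≤ m → σs i ∉ K (i - 1) ∧ K i = K (i - 1) ∪ {σs i})
    (q i : ℕ) (hi1 : 1 ≤ i) (him : i ≤ m) (hq : (σs i).card = q + 1) :
    bdry V (Finsupp.single (σs i) 1) ∈ bdriesOf (chainCard (K (i - 1))) q ↔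
      GivesBirth K (q + 1) i :=
  boundary_mem_iff_givesBirth_general m K σs hcx hstep q i hi1 him hq
end

section
/- Let K be a finite simplicial complex with an acyclic partial matching μ : M → M. Then the set B_q^R ∪ B_q^↑ ∪ B_q^↓, where B_q^R = {φ_q(γ) : γ ∈ R_q(μ)}, B_q^↑ = M_q^↑, and B_q^↓ = {∂β : β ∈ M_{q+1}^↑}, is a basis of the ℤ/2-vector space C_q(K). -/
set_option maxSynthPendingDepth 2

/-! Discrete Morse theory: partial matchings, acyclicity, the closure map. -/

/-- `Covers σ τ`: `σ` covers `τ` in the face poset, i.e. `τ ⊆ σ` in codimension one. -/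
def Covers {V : Type*} (σ τ : Finset V) : Prop :=
  τ ⊆ σ ∧ σ.card = τ.card + 1

/-- A partial matching: an involution `μ` on a set `M` of simplices matching each
simplex with a simplex that covers it or that it covers. -/
structure PartialMatching (V : Type*) where
  M : Set (Finset V)
  μ : Finset V → Finset V
  mem_M : ∀ σ ∈ M, μ σ ∈ M
  invol : ∀ σ ∈ M, μ (μ σ) = σ
  matched : ∀ σ ∈ M, Covers (μ σ) σ ∨ Covers σ (μ σ)

/-- Acyclicity of a partial matching: there is no cyclic sequence
`σ₁ ≻ μ(σ₁) ≺ σ₂ ≻ μ(σ₂) ≺ ⋯ ≺ σ_l ≻ μ(σ_l) ≺ σ₁` with `l ≥ 2` and the `σᵢ` distinct. -/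
def PartialMatching.Acyclic {V : Type*} (m : PartialMatching V) : Prop :=
  ¬ ∃ (l : ℕ) (f : ℕ → Finset V), 2 ≤ l ∧
      (∀ i < l, ∀ j < l, f i = f j → i = j) ∧
      (∀ i < l, f i ∈ m.M ∧ Covers (f i) (m.μ (f i))) ∧
      (∀ i < l, Covers (f ((i + 1) % l)) (m.μ (f i)))

/-- `M^↑`: matched simplices lying above their partner. -/
def Mup {V : Type*} (m : PartialMatching V) : Set (Finset V) :=
  {σ | σ ∈ m.M ∧ Covers σ (m.μ σ)}

/-- `M_q^↑` in cardinality grading: elements of `M^↑` with `k` vertices (degree `k-1`). -/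
def MupCard {V : Type*} (m : PartialMatching V) (k : ℕ) : Set (Finset V) :=
  {σ | σ ∈ Mup m ∧ σ.card = k}

/-- `R_q(μ)` in cardinality grading: the unmatched (critical) simplices of `K`
with `k` vertices (degree `k-1`). -/
def Rcard {V : Type*} (K : Set (Finset V)) (m : PartialMatching V) (k : ℕ) :
    Set (Finset V) :=
  {σ | σ ∈ K ∧ σ.card = k ∧ σ ∉ m.M}

/-- `(α, β)` is an edge of the graph `G(μ)`: `μ β` is defined, `β` lies above its
partner, and `α` covers `μ β` (with `β ≠ α`). -/
def IsEdge {V : Type*} (m : PartialMatching V) (α β : Finset V) : Prop :=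
  β ≠ α ∧ β ∈ m.M ∧ Covers β (m.μ β) ∧ Covers α (m.μ β)

open scoped Classical in
/-- `φ` is the closure map of the matching `m` on `K`: it satisfies the defining
recursion `φ α = α + ∑ φ β` over the edges `(α, β)` emanating from `α` in `G(μ)`. -/
def IsClosure {V : Type*} [Fintype V] [DecidableEq V] (K : Set (Finset V))
    (m : PartialMatching V) (φ : Finset V → Ch V) : Prop :=
  ∀ α ∈ K, φ α = Finsupp.single α 1 + ∑ β : Finset V, if IsEdge m α β then φ β else 0

/-- The degree-`(k-1)` chain group of the Morse (critical) complex of `C`: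
the span of the closures of the unmatched simplices of `C` with `k` vertices. -/
noncomputable def critWOn {V : Type*} [DecidableEq V] (C : Set (Finset V))
    (m : PartialMatching V) (φ : Finset V → Ch V) (k : ℕ) :
    Submodule (ZMod 2) (Ch V) :=
  Submodule.span (ZMod 2) {f | ∃ γ, γ ∈ C ∧ γ.card = k ∧ γ ∉ m.M ∧ f = φ γ}

theorem critWOn_mono {V : Type*} [DecidableEq V] {C₁ C₂ : Set (Finset V)}
    (h : C₁ ⊆ C₂) (m : PartialMatching V) (φ : Finset V → Ch V) (k : ℕ) :
    critWOn C₁ m φ k ≤ critWOn C₂ m φ k := by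
  apply Submodule.span_mono
  rintro f ⟨γ, hγ, hc, hm, rfl⟩
  exact ⟨γ, h hγ, hc, hm, rfl⟩

/-- The degree-`(k-1)` chain group of the complex `Match`, spanned by `M_{k-1}^↑`
together with the boundaries of the elements of `M_k^↑`. -/
noncomputable def matchW {V : Type*} [DecidableEq V] (m : PartialMatching V) (k : ℕ) :
    Submodule (ZMod 2) (Ch V) :=
  Submodule.span (ZMod 2)
    ({f | ∃ σ ∈ MupCard m k, f = Finsupp.single σ 1} ∪
      {f | ∃ β ∈ MupCard m (k + 1), f = bdry V (Finsupp.single β 1)})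

/-- The set `B_q^R ∪ B_q^↑ ∪ B_q^↓` (in cardinality grading `k = q + 1`). -/
noncomputable def morseBasis {V : Type*} [DecidableEq V] (K : Set (Finset V))
    (m : PartialMatching V) (φ : Finset V → Ch V) (k : ℕ) : Set (Ch V) :=
  {f | ∃ γ ∈ Rcard K m k, f = φ γ} ∪
    ({f | ∃ σ ∈ MupCard m k, f = Finsupp.single σ 1} ∪
      {f | ∃ β ∈ MupCard m (k + 1), f = bdry V (Finsupp.single β 1)})

/-! Index the Morse basis by the `q`-simplices: `σ ∈ M^↑` gives `σ`, `σ ∈ M^↓` gives `∂ μ(σ)`, and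
a critical `σ` gives `φ σ`. Each such vector is `σ` plus simplices of lower rank, where `M^↑`
ranks lowest, then the critical simplices, then `σ ∈ M^↓` ordered by the number of simplices
reachable from `μ(σ)` in the acyclic graph `G(μ)`: the other faces of `μ(σ)` lie in `M^↑`, are
critical, or are matched with a simplex strictly below `μ(σ)` in `G(μ)`, and `φ σ - σ` is
supported on `M^↑` by induction along `G(μ)`. By unitriangularity the Morse vectors span `C_q(K)`,
and as there are no more of them than `q`-simplices, they are independent. -/

open Submodule Finsupp

section Unitriangular

variable {R M ι : Type*}

theorem span_image_eq_of_unitriangular [Ring R] [AddCommGroup M] [Module R M]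
    {s : Set ι} {b e : ι → M} (ρ : ι → ℕ)
    (he : ∀ i ∈ s, e i - b i ∈ span R (b '' {j | j ∈ s ∧ ρ j < ρ i})) :
    span R (e '' s) = span R (b '' s) := by
  apply le_antisymm
  · refine span_le.2 ?_
    rintro _ ⟨i, hi, rfl⟩
    rw [SetLike.mem_coe, ← sub_add_cancel (e i) (b i)]
    exact add_mem (span_mono (Set.image_mono fun j hj => hj.1) (he i hi))
      (subset_span ⟨i, hi, rfl⟩)
  · refine span_le.2 ?_
    rintro _ ⟨i, hi, rfl⟩
    induction hn : ρ i using Nat.strong_induction_on generalizing i with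
    | _ n ih =>
      have hlower : span R (b '' {j | j ∈ s ∧ ρ j < ρ i}) ≤ span R (e '' s) := by
        refine span_le.2 ?_
        rintro _ ⟨j, ⟨hj, hlt⟩, rfl⟩
        exact ih (ρ j) (hn ▸ hlt) j hj rfl
      rw [SetLike.mem_coe, ← sub_sub_cancel (e i) (b i)]
      exact sub_mem (subset_span ⟨i, hi, rfl⟩) (hlower (he i hi))

theorem LinearIndepOn.of_span_image_eq [CommRing R] [Nontrivial R] [AddCommGroup M]
    [Module R M] {s : Set ι} (hs : s.Finite) {b e : ι → M} (hb : LinearIndepOn R b s)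
    (h : span R (e '' s) = span R (b '' s)) : LinearIndepOn R e s := by
  have := hs.fintype
  rw [LinearIndepOn, linearIndependent_iff_card_le_finrank_span, Set.finrank,
    ← Set.image_eq_range, h, Set.image_eq_range, finrank_span_eq_card hb]

end Unitriangular

theorem Relation.TransGen.exists_walk {X : Type*} {r : X → X → Prop} {a b : X}
    (h : Relation.TransGen r a b) :
    ∃ n, 0 < n ∧ ∃ g : ℕ → X, g 0 = a ∧ g n = b ∧ ∀ i < n, r (g i) (g (i + 1)) := by
  induction h with
  | single hab => exact ⟨1, one_pos, fun i => if i = 0 then a else _, rfl, rfl,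
      fun i hi => by simpa [Nat.lt_one_iff.1 hi] using hab⟩
  | @tail b c _ hbc ih =>
    obtain ⟨n, hn, g, hg0, hgn, hg⟩ := ih
    refine ⟨n + 1, n.succ_pos, fun i => if i ≤ n then g i else c, by simpa using hg0,
      by simp, fun i hi => ?_⟩
    rcases Nat.lt_or_ge i n with hin | hin
    · simpa [hin.le, Nat.succ_le_of_lt hin] using hg i hin
    · obtain rfl : i = n := by omega
      simpa [hgn] using hbc

theorem IsEdge.card_eq {V : Type*} {m : PartialMatching V} {α β : Finset V}
    (he : IsEdge m α β) : β.card = α.card := by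
  have := he.2.2.1.2
  have := he.2.2.2.2
  omega

namespace PartialMatching

variable {V : Type*} {m : PartialMatching V} {σ : Finset V}

theorem Acyclic.not_closed_walk (hac : m.Acyclic) (n : ℕ) (hn : 0 < n) (g : ℕ → Finset V)
    (hg : g 0 = g n) : ¬ ∀ i < n, IsEdge m (g (i + 1)) (g i) := by
  induction n using Nat.strong_induction_on generalizing g with
  | _ n ih =>
    intro hedge
    by_cases hinj : ∀ i < n, ∀ j < n, g i = g j → i = j
    · have hn2 : 2 ≤ n := by
        by_contra! hn1
        obtain rfl : n = 1 := by omega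
        exact (hedge 0 one_pos).1 hg
      refine hac ⟨n, g, hn2, hinj, fun i hi => ⟨(hedge i hi).2.1, (hedge i hi).2.2.1⟩,
        fun i hi => ?_⟩
      rcases Nat.lt_or_ge (i + 1) n with hlt | hge
      · simpa [Nat.mod_eq_of_lt hlt] using (hedge i hi).2.2.2
      · obtain rfl : n = i + 1 := by omega
        simpa [hg] using (hedge i hi).2.2.2
    · -- a repeated vertex `g i = g j` cuts out a shorter closed walk
      push Not at hinj
      obtain ⟨i, hi, j, hj, hij, hne⟩ := hinj
      wlog hlt : i < j generalizing i j
      · exact this j hj i hi hij.symm hne.symm (by omega)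
      refine ih (j - i) (by omega) (by omega) (fun t => g (i + t)) (by simpa [hlt.le] using hij)
        fun t ht => ?_
      simpa [Nat.add_assoc] using hedge (i + t) (by omega)

theorem Acyclic.not_transGen_self (hac : m.Acyclic) (σ : Finset V) :
    ¬ Relation.TransGen (flip (IsEdge m)) σ σ := fun h => by
  obtain ⟨n, hn, g, hg0, hgn, hg⟩ := h.exists_walk
  exact hac.not_closed_walk n hn g (hg0.trans hgn.symm) hg

noncomputable def reachCount (m : PartialMatching V) (σ : Finset V) : ℕ :=
  {τ | Relation.TransGen (flip (IsEdge m)) τ σ}.ncard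

theorem reachCount_lt [Finite V] (hac : m.Acyclic) {α β : Finset V} (he : IsEdge m α β) :
    m.reachCount β < m.reachCount α :=
  Set.ncard_lt_ncard ((Set.ssubset_iff_of_subset fun _ h => h.tail he).2
    ⟨β, .single he, hac.not_transGen_self β⟩) (Set.toFinite _)

theorem μ_mem_Mup (hσ : σ ∈ m.M) (hup : σ ∉ Mup m) : m.μ σ ∈ Mup m :=
  ⟨m.mem_M σ hσ, by
    rw [m.invol σ hσ]
    exact (m.matched σ hσ).resolve_right fun h => hup ⟨hσ, h⟩⟩

theorem μ_notMem_Mup (hup : σ ∈ Mup m) : m.μ σ ∉ Mup m := fun h => by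
  have h' := h.2.2
  rw [m.invol σ hup.1] at h'
  have := hup.2.2
  omega

theorem isEdge_μ_of_covers {α : Finset V} (hσ : σ ∈ m.M) (hup : σ ∉ Mup m) (hcov : Covers α σ)
    (hne : m.μ σ ≠ α) : IsEdge m α (m.μ σ) :=
  ⟨hne, (μ_mem_Mup hσ hup).1, (μ_mem_Mup hσ hup).2, by rwa [m.invol σ hσ]⟩

end PartialMatching

open PartialMatching

theorem IsClosure.sub_single_mem_span {V : Type*} [Fintype V] [DecidableEq V]
    {K : Set (Finset V)} {m : PartialMatching V} {φ : Finset V → Ch V}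
    (hφ : IsClosure K m φ) (hMK : m.M ⊆ K) (hac : m.Acyclic) {α : Finset V} (hα : α ∈ K) :
    φ α - single α 1 ∈
      span (ZMod 2) ((single · 1) '' {τ | (τ ∈ K ∧ τ.card = α.card) ∧ τ ∈ Mup m}) := by
  induction hn : m.reachCount α using Nat.strong_induction_on generalizing α with
  | _ n ih =>
    classical
    rw [hφ α hα, add_sub_cancel_left]
    refine sum_mem fun β _ => ?_
    split_ifs with he
    · have hβ : β ∈ Mup m := ⟨he.2.1, he.2.2.1⟩
      have hβK : β ∈ K := hMK hβ.1
      rw [← he.card_eq, ← sub_add_cancel (φ β) (single β 1)]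
      exact add_mem (ih _ (hn ▸ reachCount_lt hac he) hβK rfl)
        (subset_span ⟨β, ⟨⟨hβK, rfl⟩, hβ⟩, rfl⟩)
    · exact zero_mem _

theorem bdry_single_insert {V : Type*} [DecidableEq V] {σ : Finset V} {v : V} (hv : v ∉ σ)
    (hσ : σ.Nonempty) :
    bdry V (single (insert v σ) 1) = single σ 1 + ∑ w ∈ σ, single ((insert v σ).erase w) 1 := by
  have h2 : 2 ≤ (insert v σ).card := by
    rw [Finset.card_insert_of_notMem hv]
    have := hσ.card_pos
    omega
  rw [bdry, linearCombination_single, one_smul, if_neg (by omega), Finset.sum_insert hv,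
    Finset.erase_insert hv]

section MorseVectors

variable {V : Type*} [DecidableEq V] {K : Set (Finset V)} {m : PartialMatching V}
  {φ : Finset V → Ch V}

noncomputable def morseVec (m : PartialMatching V) (φ : Finset V → Ch V) (σ : Finset V) :
    Ch V :=
  open scoped Classical in
  if σ ∈ Mup m then single σ 1 else if σ ∈ m.M then bdry V (single (m.μ σ) 1) else φ σ

noncomputable def morseRank (m : PartialMatching V) (σ : Finset V) : ℕ :=
  open scoped Classical in
  if σ ∈ Mup m then 0 else if σ ∈ m.M then m.reachCount (m.μ σ) + 2 else 1

theorem morseBasis_eq_image (hMK : m.M ⊆ K) (k : ℕ) :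
    morseBasis K m φ k = morseVec m φ '' {σ | σ ∈ K ∧ σ.card = k} := by
  ext f
  constructor
  · rintro (⟨γ, ⟨hγK, hγk, hγ⟩, rfl⟩ | ⟨σ, ⟨hup, hσk⟩, rfl⟩ | ⟨β, ⟨hβ, hβk⟩, rfl⟩)
    · have hγup : γ ∉ Mup m := fun h => hγ h.1
      exact ⟨γ, ⟨hγK, hγk⟩, by simp [morseVec, hγ, hγup]⟩
    · exact ⟨σ, ⟨hMK hup.1, hσk⟩, by simp [morseVec, hup]⟩
    · have hcard := hβ.2.2
      refine ⟨m.μ β, ⟨hMK (m.mem_M β hβ.1), by omega⟩, ?_⟩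
      simp [morseVec, μ_notMem_Mup hβ, m.mem_M β hβ.1, m.invol β hβ.1]
  · rintro ⟨σ, ⟨hσK, hσk⟩, rfl⟩
    by_cases hup : σ ∈ Mup m
    · exact .inr (.inl ⟨σ, ⟨hup, hσk⟩, by simp [morseVec, hup]⟩)
    by_cases hσ : σ ∈ m.M
    · have hβ := μ_mem_Mup hσ hup
      have hcard := hβ.2.2
      rw [m.invol σ hσ] at hcard
      exact .inr (.inr ⟨m.μ σ, ⟨hβ, by omega⟩, by simp [morseVec, hup, hσ]⟩)
    · exact .inl ⟨σ, ⟨hσK, hσk, hσ⟩, by simp [morseVec, hup, hσ]⟩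

theorem bdry_μ_sub_single_mem_span [Finite V] (hK : IsComplex K) (hMK : m.M ⊆ K)
    (hac : m.Acyclic) {σ : Finset V} (hσK : σ ∈ K) (hσ : σ ∈ m.M) (hup : σ ∉ Mup m) :
    bdry V (single (m.μ σ) 1) - single σ 1 ∈ span (ZMod 2) ((single · 1) ''
      {τ | (τ ∈ K ∧ τ.card = σ.card) ∧ morseRank m τ < m.reachCount (m.μ σ) + 2}) := by
  have hβ : m.μ σ ∈ Mup m := μ_mem_Mup hσ hup
  have hβσ : Covers (m.μ σ) σ := by simpa [m.invol σ hσ] using hβ.2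
  obtain ⟨v₀, hv₀σ, hins⟩ : ∃ v₀ ∉ σ, insert v₀ σ = m.μ σ :=
    Finset.exists_eq_insert_iff.2 ⟨hβσ.1, hβσ.2.symm⟩
  have hσne := (hK σ hσK).1
  have hbdry := bdry_single_insert hv₀σ hσne
  rw [hins] at hbdry
  rw [hbdry, add_sub_cancel_left]
  refine sum_mem fun w hw => ?_
  have hwβ : w ∈ m.μ σ := hins ▸ Finset.mem_insert_of_mem hw
  have hτβ : Covers (m.μ σ) ((m.μ σ).erase w) :=
    ⟨Finset.erase_subset _ _, (Finset.card_erase_add_one hwβ).symm⟩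
  have hτcard : ((m.μ σ).erase w).card = σ.card := by
    have := hτβ.2
    have := hβσ.2
    omega
  have hτσ : (m.μ σ).erase w ≠ σ := fun h => hv₀σ <| h ▸
    Finset.mem_erase.2 ⟨fun hv => hv₀σ (hv ▸ hw), hins ▸ Finset.mem_insert_self v₀ σ⟩
  have hτK : (m.μ σ).erase w ∈ K := (hK _ (hMK hβ.1)).2 _ (Finset.erase_subset _ _)
    (Finset.card_pos.1 (hτcard ▸ hσne.card_pos))
  refine subset_span ⟨_, ⟨⟨hτK, hτcard⟩, ?_⟩, rfl⟩
  unfold morseRank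
  split_ifs with hτup hτ
  · omega
  · have hne : m.μ ((m.μ σ).erase w) ≠ m.μ σ := fun h =>
      hτσ (by rw [← m.invol _ hτ, h, m.invol σ hσ])
    have := reachCount_lt hac (isEdge_μ_of_covers hτ hτup hτβ hne)
    omega
  · omega

theorem morseVec_sub_single_mem_span [Fintype V] (hK : IsComplex K) (hMK : m.M ⊆ K)
    (hac : m.Acyclic) (hφ : IsClosure K m φ) {k : ℕ} {σ : Finset V} (hσK : σ ∈ K)
    (hσk : σ.card = k) :
    morseVec m φ σ - single σ 1 ∈ span (ZMod 2) ((single · 1) ''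
      {τ | (τ ∈ K ∧ τ.card = k) ∧ morseRank m τ < morseRank m σ}) := by
  subst hσk
  by_cases hup : σ ∈ Mup m
  · simp [morseVec, hup]
  by_cases hσ : σ ∈ m.M
  · simpa [morseVec, morseRank, hup, hσ] using bdry_μ_sub_single_mem_span hK hMK hac hσK hσ hup
  · rw [morseVec, if_neg hup, if_neg hσ]
    refine span_mono (Set.image_mono ?_) (hφ.sub_single_mem_span hMK hac hσK)
    rintro τ ⟨hτ, hτup⟩
    exact ⟨hτ, by simp [morseRank, hτup, hup, hσ]⟩

end MorseVectors

/-- For a finite simplicial complex `K` with an acyclic partial matching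
`μ : M → M`, the set `B_q^R ∪ B_q^↑ ∪ B_q^↓` — where `B_q^R = {φ_q γ : γ ∈ R_q(μ)}`,
`B_q^↑ = M_q^↑` and `B_q^↓ = {∂β : β ∈ M_{q+1}^↑}` — is a basis of the `ℤ/2`-vector
space `C_q(K)`. -/
theorem morseBasis_isBasis {V : Type*} [Fintype V] [DecidableEq V]
    (K : Set (Finset V)) (hK : IsComplex K)
    (m : PartialMatching V) (hMK : m.M ⊆ K) (hac : m.Acyclic)
    (φ : Finset V → Ch V) (hφ : IsClosure K m φ) (q : ℕ) :
    LinearIndependent (ZMod 2)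
      (fun x : morseBasis K m φ (q + 1) => (x : Ch V)) ∧
    Submodule.span (ZMod 2) (morseBasis K m φ (q + 1)) = chainCard K (q + 1) := by
  set S := {σ | σ ∈ K ∧ σ.card = q + 1}
  have hspan : span (ZMod 2) (morseVec m φ '' S) = span (ZMod 2) ((single · 1) '' S) :=
    span_image_eq_of_unitriangular (morseRank m) fun σ hσ =>
      morseVec_sub_single_mem_span hK hMK hac hφ hσ.1 hσ.2
  have hindep : LinearIndepOn (ZMod 2) (morseVec m φ) S :=
    .of_span_image_eq S.toFinite ((linearIndependent_single_one _ _).linearIndepOn S) hspan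
  rw [morseBasis_eq_image hMK]
  refine ⟨hindep.id_image, hspan.trans ?_⟩
  unfold chainCard
  congr 1
  ext f
  simp [S, eq_comm, and_assoc]
end

section
/- Let K be a finite simplicial complex with an acyclic partial matching μ : M → M. If σ ∈ C_q(K) has support contained in M^↑ and ∂σ = 0, then σ = 0. -/
set_option maxSynthPendingDepth 2

/-!
If `α` lies in the support of a cycle `σ` and `α ≻ μ α`, then `α` contributes `1` to the
coefficient of `μ α` in `∂σ = 0`, so some other `β` in the support also covers `μ α`. Choosing such
a `β` for every `α` gives a fixed-point-free self-map of the finite support of `σ`; a periodic orbit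
of this map is a closed gradient path `α₁ ≻ μ α₁ ≺ α₂ ≻ ⋯ ≺ α₁`, which acyclicity forbids.
-/

theorem Function.periodicPts_nonempty {α : Type*} [Finite α] [Nonempty α] (f : α → α) :
    (Function.periodicPts f).Nonempty := by
  obtain ⟨a, b, hab, heq⟩ :=
    Finite.exists_ne_map_eq_of_infinite fun n : ℕ => f^[n] (Classical.arbitrary α)
  wlog hlt : a < b generalizing a b
  · exact this b a hab.symm heq.symm (by omega)
  refine ⟨f^[a] (Classical.arbitrary α), b - a, by omega, ?_⟩
  rw [Function.IsPeriodicPt, Function.IsFixedPt, ← Function.iterate_add_apply,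
    Nat.sub_add_cancel hlt.le, heq]

section Boundary

variable {V : Type*} [DecidableEq V]

theorem covers_iff_exists_erase {σ τ : Finset V} :
    Covers σ τ ↔ ∃ v ∈ σ, σ.erase v = τ := by
  rw [← Finset.covBy_iff_exists_erase, Finset.covBy_iff_card_sdiff_eq_one, Covers]
  refine and_congr_right fun hsub => ?_
  rw [Finset.card_sdiff_of_subset hsub]
  have hcard_le := Finset.card_le_card hsub
  omega

theorem bdry_apply (c : Ch V) (τ : Finset V) :
    bdry V c τ = ∑ α ∈ c.support, c α * bdry V (Finsupp.single α 1) τ := by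
  rw [bdry, Finsupp.linearCombination_apply, Finsupp.sum, Finsupp.finsetSum_apply]
  simp only [Finsupp.linearCombination_single, one_smul, Finsupp.smul_apply, smul_eq_mul]

theorem bdry_single_apply_of_covers {α τ : Finset V} (h2 : 2 ≤ α.card) (h : Covers α τ) :
    bdry V (Finsupp.single α 1) τ = 1 := by
  obtain ⟨v, hv, rfl⟩ := covers_iff_exists_erase.mp h
  rw [bdry, Finsupp.linearCombination_single, one_smul, if_neg (by omega),
    Finsupp.finsetSum_apply, Finset.sum_eq_single_of_mem v hv, Finsupp.single_eq_same]
  intro w hw hwv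
  exact Finsupp.single_eq_of_ne' fun h => hwv (Finset.erase_injOn _ hw hv h)

theorem bdry_single_apply_of_not_covers {α τ : Finset V} (h : ¬Covers α τ) :
    bdry V (Finsupp.single α 1) τ = 0 := by
  rw [bdry, Finsupp.linearCombination_single, one_smul]
  split_ifs
  · rfl
  rw [Finsupp.finsetSum_apply]
  refine Finset.sum_eq_zero fun v hv => Finsupp.single_eq_of_ne' fun he => ?_
  exact h (covers_iff_exists_erase.mpr ⟨v, hv, he⟩)

theorem exists_ne_covers_of_bdry_eq_zero {c : Ch V} (hc : bdry V c = 0) {α τ : Finset V}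
    (hα : α ∈ c.support) (h2 : 2 ≤ α.card) (hατ : Covers α τ) :
    ∃ β ∈ c.support, β ≠ α ∧ Covers β τ := by
  by_contra! hnone
  have hτ : bdry V c τ = c α := by
    rw [bdry_apply, Finset.sum_eq_single_of_mem α hα, bdry_single_apply_of_covers h2 hατ, mul_one]
    intro β hβ hβα
    rw [bdry_single_apply_of_not_covers (hnone β hβ hβα), mul_zero]
  exact Finsupp.mem_support_iff.mp hα (by rw [← hτ, hc, Finsupp.zero_apply])

end Boundary

section Matching

variable {V : Type*} {m : PartialMatching V}

theorem two_le_card_of_mem_Mup {K : Set (Finset V)} (hK : IsComplex K) (hMK : m.M ⊆ K)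
    {α : Finset V} (hα : α ∈ Mup m) : 2 ≤ α.card := by
  have hμ_pos := Finset.card_pos.mpr (hK _ (hMK (m.mem_M α hα.1))).1
  have hα_card := hα.2.2
  omega

theorem PartialMatching.Acyclic.exists_fixedPt (hac : m.Acyclic)
    {S : Set (Finset V)} [Finite S] [Nonempty S] (hS : S ⊆ Mup m) (g : S → S)
    (hg : ∀ α, Covers (g α) (m.μ α)) : ∃ α, g α = α := by
  obtain ⟨y, hy⟩ := Function.periodicPts_nonempty g
  by_contra! hfix
  set l := Function.minimalPeriod g y
  have hl0 : 0 < l := Function.minimalPeriod_pos_iff_mem_periodicPts.mpr hy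
  have hl1 : l ≠ 1 := fun h => hfix y (Function.minimalPeriod_eq_one_iff_isFixedPt.mp h)
  refine hac ⟨l, fun i => g^[i] y, by omega, fun i hi j hj hij => ?_, fun i _ => hS (g^[i] y).2,
    fun i _ => ?_⟩
  · exact Function.iterate_injOn_Iio_minimalPeriod hi hj (Subtype.ext hij)
  · dsimp only
    rw [(Function.isPeriodicPt_minimalPeriod g y).iterate_mod_apply,
      Function.iterate_succ_apply']
    exact hg _

end Matching

theorem eq_zero_of_support_subset_Mup_general {V : Type*} [DecidableEq V]
    (K : Set (Finset V)) (hK : IsComplex K)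
    (m : PartialMatching V) (hMK : m.M ⊆ K) (hac : m.Acyclic)
    (σ : Ch V)
    (hsupp : ∀ τ ∈ σ.support, τ ∈ Mup m) (hcyc : bdry V σ = 0) :
    σ = 0 := by
  by_contra hne
  let S : Set (Finset V) := σ.support
  have : Nonempty S := (Finsupp.support_nonempty_iff.mpr hne).to_subtype
  have hnext : ∀ α : S, ∃ β : S, β ≠ α ∧ Covers β (m.μ α) := fun ⟨α, hα⟩ => by
    obtain ⟨β, hβ, hβα, hcov⟩ := exists_ne_covers_of_bdry_eq_zero hcyc hα
      (two_le_card_of_mem_Mup hK hMK (hsupp α hα)) (hsupp α hα).2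
    exact ⟨⟨β, hβ⟩, Subtype.coe_ne_coe.mp hβα, hcov⟩
  choose g hg_ne hg_cov using hnext
  obtain ⟨α, hα⟩ := hac.exists_fixedPt (fun τ hτ => hsupp τ hτ) g hg_cov
  exact hg_ne α hα

/-- For a finite simplicial complex `K` with an acyclic partial matching
`μ`, a chain `σ ∈ C_q(K)` whose support is contained in `M^↑` and with `∂σ = 0` is zero. -/
theorem eq_zero_of_support_subset_Mup {V : Type*} [Fintype V] [DecidableEq V]
    (K : Set (Finset V)) (hK : IsComplex K)
    (m : PartialMatching V) (hMK : m.M ⊆ K) (hac : m.Acyclic)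
    (q : ℕ) (σ : Ch V) (hσ : σ ∈ chainCard K (q + 1))
    (hsupp : ∀ τ ∈ σ.support, τ ∈ Mup m) (hcyc : bdry V σ = 0) :
    σ = 0 :=
  eq_zero_of_support_subset_Mup_general K hK m hMK hac σ hsupp hcyc
end
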